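/- arXiv:2309.00687 — 2 statements merged into one kernel-verified Lean document; each statement's English description precedes it below -/
import Mathlib

section
/- For a linear code C ≤ (F_{q^m})^n, the following are equivalent: (i) dim_{F_q}(tr(C)) = m·dim_{F_{q^m}}(C); (ii) every F_{q^m}-linear subspace D of C satisfies dim_{F_q}(tr(D)) = m·dim_{F_{q^m}}(D); (iii) for every nonzero x in C, tr(x) ≠ 0; (iv) C ∩ K = {0}, where K is the kernel of the coordinatewise trace map (F_{q^m})^n -> (F_q)^n. -/
open Module

/-- The coordinatewise trace map `(F_{q^m})^n → (F_q)^n`. -/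
noncomputable def trVec (Fq K : Type) [Field Fq] [Field K] [Algebra Fq K] (n : ℕ) :
    (Fin n → K) →ₗ[Fq] (Fin n → Fq) :=
  LinearMap.pi fun i => (Algebra.trace Fq K).comp (LinearMap.proj i)

/-- The trace code `tr(C)` of an `F_{q^m}`-linear code `C`. -/
noncomputable def traceCode (Fq K : Type) [Field Fq] [Field K] [Algebra Fq K] {n : ℕ}
    (C : Submodule K (Fin n → K)) : Submodule Fq (Fin n → Fq) :=
  (C.restrictScalars Fq).map (trVec Fq K n)

/-!
A linear map preserves the dimension of a subspace exactly when it is injective on it. By the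
tower law, `C` has `F_q`-dimension `m · dim C`, so `tr` preserves its dimension iff
`C ∩ ker tr = 0`. This last condition passes to subcodes and is a restatement of (iii).
-/

theorem Submodule.finrank_map_eq_iff_disjoint_ker {k V W : Type*} [DivisionRing k]
    [AddCommGroup V] [Module k V] [AddCommGroup W] [Module k W]
    {L : Submodule k V} [FiniteDimensional k L] (f : V →ₗ[k] W) :
    finrank k (L.map f) = finrank k L ↔ Disjoint L (LinearMap.ker f) := by
  refine ⟨fun h => Submodule.disjoint_ker_of_finrank_le f h.ge, fun h => ?_⟩
  rw [← LinearMap.range_domRestrict]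
  exact LinearMap.finrank_range_of_inj (LinearMap.injective_domRestrict_iff.mpr h)

theorem finrank_traceCode_eq_iff_disjoint_ker {Fq K : Type} [Field Fq] [Field K] [Algebra Fq K]
    [FiniteDimensional Fq K] {n : ℕ} (D : Submodule K (Fin n → K)) :
    finrank Fq (traceCode Fq K D) = finrank Fq K * finrank K D ↔
      Disjoint (D.restrictScalars Fq) (LinearMap.ker (trVec Fq K n)) := by
  have tower : finrank Fq (D.restrictScalars Fq) = finrank Fq K * finrank K D :=
    (finrank_mul_finrank Fq K D).symm
  rw [traceCode, ← tower]
  exact Submodule.finrank_map_eq_iff_disjoint_ker _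

theorem stmt_2_general (m n : ℕ) (hm : 0 < m)
    (Fq K : Type) [Field Fq] [Field K] [Algebra Fq K]
    (hfr : Module.finrank Fq K = m)
    (C : Submodule K (Fin n → K)) :
    List.TFAE [
      Module.finrank Fq (traceCode Fq K C) = m * Module.finrank K C,
      ∀ D : Submodule K (Fin n → K), D ≤ C →
        Module.finrank Fq (traceCode Fq K D) = m * Module.finrank K D,
      ∀ x ∈ C, x ≠ (0 : Fin n → K) → trVec Fq K n x ≠ 0,
      C.restrictScalars Fq ⊓ LinearMap.ker (trVec Fq K n) = ⊥ ] := by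
  have : FiniteDimensional Fq K := Module.finite_of_finrank_pos (hfr ▸ hm)
  subst hfr
  tfae_have 1 ↔ 4 := (finrank_traceCode_eq_iff_disjoint_ker C).trans disjoint_iff
  tfae_have 2 → 1 := fun h => h C le_rfl
  tfae_have 4 → 2 := fun h D hD => (finrank_traceCode_eq_iff_disjoint_ker D).2 <|
    (disjoint_iff.2 h).mono_left (Submodule.restrictScalars_mono Fq hD)
  tfae_have 3 ↔ 4 := by
    rw [← disjoint_iff, Submodule.disjoint_def]
    exact forall₂_congr fun x _ => not_imp_not
  tfae_finish

theorem stmt_2 (q m n : ℕ) (hq : IsPrimePow q) (hm : 0 < m)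
    (Fq K : Type) [Field Fq] [Field K] [Algebra Fq K] [Fintype Fq] [Fintype K]
    (hcq : Fintype.card Fq = q) (hcK : Fintype.card K = q ^ m)
    (hfr : Module.finrank Fq K = m)
    (C : Submodule K (Fin n → K)) :
    List.TFAE [
      Module.finrank Fq (traceCode Fq K C) = m * Module.finrank K C,
      ∀ D : Submodule K (Fin n → K), D ≤ C →
        Module.finrank Fq (traceCode Fq K D) = m * Module.finrank K D,
      ∀ x ∈ C, x ≠ (0 : Fin n → K) → trVec Fq K n x ≠ 0,
      C.restrictScalars Fq ⊓ LinearMap.ker (trVec Fq K n) = ⊥ ] :=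
  stmt_2_general m n hm Fq K hfr C
end

section
/- Delsarte's theorem: For any F_{q^m}-linear code C ≤ (F_{q^m})^n, the dual (over F_q) of the trace code equals the subfield subcode of the dual: (tr(C))^⊥ = (C^⊥) ∩ (F_q)^n. -/
open Module

/-- The dual code with respect to the standard bilinear form `∑ i, x i * y i`. -/
def dualCode (R : Type) [CommRing R] (n : ℕ) (C : Submodule R (Fin n → R)) :
    Submodule R (Fin n → R) where
  carrier := {y | ∀ x ∈ C, ∑ i, x i * y i = 0}
  add_mem' := by
    intro a b ha hb x hx
    simp only [Set.mem_setOf_eq] at ha hb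
    simp [Pi.add_apply, mul_add, Finset.sum_add_distrib, ha x hx, hb x hx]
  zero_mem' := by intro x hx; simp
  smul_mem' := by
    intro c y hy x hx
    simp only [Set.mem_setOf_eq] at hy
    have h := hy x hx
    calc ∑ i, x i * (c • y) i = ∑ i, c * (x i * y i) := by
          refine Finset.sum_congr rfl fun i _ => ?_
          simp [smul_eq_mul]; ring
      _ = c * ∑ i, x i * y i := by rw [Finset.mul_sum]
      _ = 0 := by rw [h, mul_zero]

/-- The coordinatewise embedding `(F_q)^n → (F_{q^m})^n`. -/
def algVec (Fq K : Type) [Field Fq] [Field K] [Algebra Fq K] (n : ℕ) :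
    (Fin n → Fq) →ₗ[Fq] (Fin n → K) :=
  LinearMap.pi fun i => (Algebra.linearMap Fq K).comp (LinearMap.proj i)

/-! For `y` over `F_q` and `c` over `F_{q^m}`, the trace pairing gives
`⟨tr c, y⟩ = Tr ⟨c, y⟩`. Hence `y ⊥ tr(C)` says exactly that `Tr ⟨c, y⟩ = 0` for every `c ∈ C`.
Since `C` is `F_{q^m}`-linear, replacing `c` by `k • c` gives `Tr (k * ⟨c, y⟩) = 0` for every `k`,
and nondegeneracy of the trace form of the separable extension forces `⟨c, y⟩ = 0`. -/

section

variable {Fq K : Type} [Field Fq] [Field K] [Algebra Fq K] {n : ℕ}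

lemma mem_dualCode {R : Type} [CommRing R] {C : Submodule R (Fin n → R)} {y : Fin n → R} :
    y ∈ dualCode R n C ↔ ∀ x ∈ C, ∑ i, x i * y i = 0 :=
  Iff.rfl

lemma sum_trVec_mul (c : Fin n → K) (y : Fin n → Fq) :
    ∑ i, trVec Fq K n c i * y i = Algebra.trace Fq K (∑ i, c i * algVec Fq K n y i) := by
  rw [map_sum]
  refine Finset.sum_congr rfl fun i _ => ?_
  have hsmul : c i * algVec Fq K n y i = y i • c i := by
    simp [algVec, Algebra.smul_def, mul_comm]
  rw [hsmul, map_smul, smul_eq_mul, mul_comm]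
  rfl

lemma mem_dualCode_traceCode {C : Submodule K (Fin n → K)} {y : Fin n → Fq} :
    y ∈ dualCode Fq n (traceCode Fq K C) ↔
      ∀ c ∈ C, Algebra.trace Fq K (∑ i, c i * algVec Fq K n y i) = 0 := by
  simp only [mem_dualCode, traceCode, Submodule.mem_map, Submodule.restrictScalars_mem,
    forall_exists_index, and_imp, forall_apply_eq_imp_iff₂, sum_trVec_mul]

theorem dualCode_traceCode [FiniteDimensional Fq K] [Algebra.IsSeparable Fq K]
    (C : Submodule K (Fin n → K)) :
    dualCode Fq n (traceCode Fq K C) =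
      Submodule.comap (algVec Fq K n) ((dualCode K n C).restrictScalars Fq) := by
  ext y
  rw [Submodule.mem_comap, Submodule.restrictScalars_mem, mem_dualCode_traceCode, mem_dualCode]
  refine ⟨fun hy c hc => ?_, fun hy c hc => by rw [hy c hc, map_zero]⟩
  refine (traceForm_nondegenerate Fq K).1 _ fun k => ?_
  have hk := hy (k • c) (C.smul_mem k hc)
  simp only [Pi.smul_apply, smul_eq_mul, mul_assoc, ← Finset.mul_sum] at hk
  rwa [Algebra.traceForm_apply, mul_comm]

end

theorem stmt_3_general (n : ℕ)
    (Fq K : Type) [Field Fq] [Field K] [Algebra Fq K] [Fintype K]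
    (C : Submodule K (Fin n → K)) :
    dualCode Fq n (traceCode Fq K C) =
      Submodule.comap (algVec Fq K n) ((dualCode K n C).restrictScalars Fq) :=
  dualCode_traceCode C

/-- Delsarte's theorem: `(tr C)^⊥ = (C^⊥)|_{F_q}`. -/
theorem stmt_3 (q m n : ℕ) (hq : IsPrimePow q) (hm : 0 < m)
    (Fq K : Type) [Field Fq] [Field K] [Algebra Fq K] [Fintype Fq] [Fintype K]
    (hcq : Fintype.card Fq = q) (hcK : Fintype.card K = q ^ m)
    (C : Submodule K (Fin n → K)) :
    dualCode Fq n (traceCode Fq K C) =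
      Submodule.comap (algVec Fq K n) ((dualCode K n C).restrictScalars Fq) :=
  stmt_3_general n Fq K C
end
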